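/- arXiv:2412.12999 — 5 statements merged into one kernel-verified Lean document; each statement's English description precedes it below -/
import Mathlib

section
/- If {U_i}_{i=1}^m is a finite collection of m closed intervals in ℝ such that the sum of their lengths is at most c·m for some c > 0, then the union ⋃_{i=1}^m U_i can be covered by at most 2m closed intervals each of diameter c. -/
/-- If `U 1, …, U m` are closed intervals in `ℝ` whose lengths sum to at most `c * m`,
then their union can be covered by at most `2 * m` closed intervals of diameter `c`. -/
theorem remark_covering (m : ℕ) (c : ℝ) (hc : 0 < c)
    (U : Fin m → Set ℝ) (x y : Fin m → ℝ) (hxy : ∀ i, x i ≤ y i)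
    (hU : ∀ i, U i = Set.Icc (x i) (y i))
    (hsum : ∑ i, Metric.diam (U i) ≤ c * m) :
    ∃ z : Fin (2 * m) → ℝ, (⋃ i, U i) ⊆ ⋃ j, Set.Icc (z j) (z j + c) := by
  rcases Nat.eq_zero_or_pos m with hm | hm
  · subst hm
    exact ⟨fun _ => 0, by simp⟩
  -- number of length-c intervals needed for U i
  set n : Fin m → ℕ := fun i => ⌊(y i - x i) / c⌋₊ + 1 with hn
  set S := Σ i : Fin m, Fin (n i)
  -- left endpoints of the covering intervals
  set f : S → ℝ := fun s => x s.1 + (s.2 : ℕ) * c with hf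
  -- the sigma-type cover works
  have hcover : (⋃ i, U i) ⊆ ⋃ s : S, Set.Icc (f s) (f s + c) := by
    intro t ht
    rcases Set.mem_iUnion.1 ht with ⟨i, hti⟩
    rw [hU i] at hti
    obtain ⟨h1, h2⟩ := hti
    set k : ℕ := ⌊(t - x i) / c⌋₊ with hk
    have hk0 : 0 ≤ (t - x i) / c := div_nonneg (by linarith) hc.le
    have hklt : k < n i := by
      have : k ≤ ⌊(y i - x i) / c⌋₊ :=
        Nat.floor_le_floor (by gcongr)
      simp only [hn]
      omega
    refine Set.mem_iUnion.2 ⟨⟨i, ⟨k, hklt⟩⟩, ?_, ?_⟩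
    · have := Nat.floor_le hk0
      have : (k : ℝ) * c ≤ t - x i := by
        calc (k : ℝ) * c ≤ (t - x i) / c * c := by
              exact mul_le_mul_of_nonneg_right this hc.le
          _ = t - x i := div_mul_cancel₀ _ hc.ne'
      simpa [hf] using by linarith
    · have := Nat.lt_floor_add_one ((t - x i) / c)
      have h3 : t - x i < ((k : ℝ) + 1) * c := by
        have := mul_lt_mul_of_pos_right this hc
        rwa [div_mul_cancel₀ _ hc.ne'] at this
      simp only [hf]
      linarith
  -- cardinality bound
  have hcard : Fintype.card S ≤ 2 * m := by
    have hdiam : ∀ i, Metric.diam (U i) = y i - x i := by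
      intro i; rw [hU i, Real.diam_Icc (hxy i)]
    have hreal : (∑ i, (n i : ℝ)) ≤ 2 * m := by
      have h1 : ∀ i : Fin m, (⌊(y i - x i) / c⌋₊ : ℝ) ≤ (y i - x i) / c := by
        intro i
        exact Nat.floor_le (div_nonneg (by linarith [hxy i]) hc.le)
      have h2 : (∑ i, (n i : ℝ)) ≤ ∑ i, ((y i - x i) / c + 1) := by
        apply Finset.sum_le_sum
        intro i _
        simp only [hn]
        push_cast
        linarith [h1 i]
      have h3 : ∑ i, ((y i - x i) / c + 1) ≤ 2 * m := by
        rw [Finset.sum_add_distrib, ← Finset.sum_div]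
        have : (∑ i, (y i - x i)) ≤ c * m := by
          calc (∑ i, (y i - x i)) = ∑ i, Metric.diam (U i) := by
                simp [hdiam]
            _ ≤ c * m := hsum
        have hdivle : (∑ i, (y i - x i)) / c ≤ m := by
          rw [div_le_iff₀ hc]; linarith [this]
        simp only [Finset.sum_const, Finset.card_univ, Fintype.card_fin, nsmul_eq_mul,
          mul_one]
        linarith
      linarith
    have : ((∑ i, n i : ℕ) : ℝ) ≤ ((2 * m : ℕ) : ℝ) := by push_cast; push_cast at hreal; linarith
    have hnat : (∑ i, n i) ≤ 2 * m := Nat.cast_le.mp this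
    simpa [S, Fintype.card_sigma] using hnat
  -- S is nonempty
  have hSne : Nonempty S := ⟨⟨⟨0, hm⟩, ⟨0, Nat.succ_pos _⟩⟩⟩
  -- embedding S ↪ Fin (2m)
  obtain ⟨e⟩ : Nonempty (S ↪ Fin (2 * m)) := by
    rw [Function.Embedding.nonempty_iff_card_le]
    simpa using hcard
  refine ⟨f ∘ Function.invFun e, ?_⟩
  intro t ht
  rcases Set.mem_iUnion.1 (hcover ht) with ⟨s, hs⟩
  refine Set.mem_iUnion.2 ⟨e s, ?_⟩
  have : Function.invFun e (e s) = s := Function.leftInverse_invFun e.injective s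
  simpa [this] using hs
end

section
/- Let a = {a_n} be a positive non-increasing summable sequence and let C_a be the associated decreasing Cantor set, constructed by iteratively removing from [0,1] open gaps: at step k, from each of the 2^k closed intervals I_{k,1},...,I_{k,2^k} one removes an open interval of length a_{2^k+j-1} from I_{k,j}. Then every closed interval I_{n,j} of step n satisfies s_{n+1} < |I_{n,j}| < s_{n-1}, where s_n = 2^{-n} ∑_{i=2^n}^∞ a_i. -/
open Filter Set Topology

/-- Number of closed balls of radius `δ` needed to cover `F`. -/
noncomputable def coverNum (F : Set ℝ) (δ : ℝ) : ℕ :=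
  sInf {n : ℕ | ∃ S : Finset ℝ, S.card = n ∧ F ⊆ ⋃ x ∈ S, Metric.closedBall x δ}

/-- Upper box-counting dimension. -/
noncomputable def upperBoxDim (F : Set ℝ) : ℝ :=
  limsup (fun δ : ℝ => Real.log (coverNum F δ) / -Real.log δ) (nhdsWithin 0 (Set.Ioi 0))

/-- Lower box-counting dimension. -/
noncomputable def lowerBoxDim (F : Set ℝ) : ℝ :=
  liminf (fun δ : ℝ => Real.log (coverNum F δ) / -Real.log δ) (nhdsWithin 0 (Set.Ioi 0))

/-- Assouad dimension. -/
noncomputable def assouadDim (E : Set ℝ) : ℝ :=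
  sInf {α : ℝ | ∃ c > (0:ℝ), ∃ ρ > (0:ℝ), ∀ x ∈ E, ∀ r R : ℝ, 0 < r → r < R → R < ρ →
    (coverNum (Metric.ball x R ∩ E) r : ℝ) ≤ c * (R / r) ^ α}

/-- Lower (Assouad) dimension. -/
noncomputable def lowerAssouadDim (E : Set ℝ) : ℝ :=
  sSup {α : ℝ | ∃ c > (0:ℝ), ∃ ρ > (0:ℝ), ∀ x ∈ E, ∀ r R : ℝ, 0 < r → r < R → R < ρ →
    c * (R / r) ^ α ≤ (coverNum (Metric.ball x R ∩ E) r : ℝ)}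

/-- Upper θ-intermediate dimension (with the convention that at θ = 0 it is the
Hausdorff dimension). -/
noncomputable def upperIntDim (θ : ℝ) (F : Set ℝ) : ℝ :=
  if θ = 0 then (dimH F).toReal else
  sInf {s : ℝ | 0 ≤ s ∧ ∀ ε > (0:ℝ), ∃ δ₀ > (0:ℝ), ∀ δ : ℝ, 0 < δ → δ ≤ δ₀ →
    ∃ (I : Finset ℕ) (U : ℕ → Set ℝ), (F ⊆ ⋃ i ∈ I, U i) ∧
      (∀ i ∈ I, δ ^ (1 / θ) ≤ Metric.diam (U i) ∧ Metric.diam (U i) ≤ δ) ∧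
      ∑ i ∈ I, Metric.diam (U i) ^ s ≤ ε}

/-- Lower θ-intermediate dimension (with the convention that at θ = 0 it is the
Hausdorff dimension). -/
noncomputable def lowerIntDim (θ : ℝ) (F : Set ℝ) : ℝ :=
  if θ = 0 then (dimH F).toReal else
  sInf {s : ℝ | 0 ≤ s ∧ ∀ ε > (0:ℝ), ∀ δ₀ > (0:ℝ), ∃ δ : ℝ, 0 < δ ∧ δ ≤ δ₀ ∧
    ∃ (I : Finset ℕ) (U : ℕ → Set ℝ), (F ⊆ ⋃ i ∈ I, U i) ∧
      (∀ i ∈ I, δ ^ (1 / θ) ≤ Metric.diam (U i) ∧ Metric.diam (U i) ≤ δ) ∧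
      ∑ i ∈ I, Metric.diam (U i) ^ s ≤ ε}

/-- tails `x_n = ∑_{i=n}^∞ a_i` (the sequence `a` is indexed from 1;
the value `a 0` is irrelevant). -/
noncomputable def xseq (a : ℕ → ℝ) (n : ℕ) : ℝ := ∑' i : ℕ, a (n + i)

/-- `s_n = 2^{-n} x_{2^n}`. -/
noncomputable def sseq (a : ℕ → ℝ) (n : ℕ) : ℝ := xseq a (2 ^ n) / 2 ^ n

/-- `r_n = 2^{-n} ∑_{i=2^n}^{2^{n+1}-1} a_i`. -/
noncomputable def rseq (a : ℕ → ℝ) (n : ℕ) : ℝ :=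
  (∑ i ∈ Finset.range (2 ^ n), a (2 ^ n + i)) / 2 ^ n

/-- The countable complementary set `D_a = {x_k : k ≥ 1} ∪ {0}`. -/
noncomputable def Da (a : ℕ → ℝ) : Set ℝ := {0} ∪ {y : ℝ | ∃ k ≥ 1, y = xseq a k}

/-- Length of the interval corresponding to node `m` (in binary-tree indexing, root `1`)
in the construction of the decreasing Cantor set: the sum of the gaps in the subtree of `m`. -/
noncomputable def clen (a : ℕ → ℝ) (m : ℕ) : ℝ :=
  ∑' k : ℕ, ∑ i ∈ Finset.range (2 ^ k), a (2 ^ k * m + i)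

/-- Left endpoint of the interval corresponding to node `m`. -/
noncomputable def lft (a : ℕ → ℝ) : ℕ → ℝ
  | 0 => 0
  | 1 => 0
  | n + 2 =>
    if (n + 2) % 2 = 0 then lft a ((n + 2) / 2)
    else lft a ((n + 2) / 2) + clen a (n + 1) + a ((n + 2) / 2)
termination_by n => n
decreasing_by all_goals omega

/-- The closed interval corresponding to node `m`:  node `2^n + j - 1` is the
interval `I_{n,j}` of step `n`, for `1 ≤ j ≤ 2^n`. -/
noncomputable def node (a : ℕ → ℝ) (m : ℕ) : Set ℝ := Set.Icc (lft a m) (lft a m + clen a m)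

/-- The decreasing Cantor set `C_a` associated with the sequence `a`. -/
noncomputable def cantorSetOf (a : ℕ → ℝ) : Set ℝ :=
  ⋂ n : ℕ, ⋃ j ∈ Finset.Icc 1 (2 ^ n), node a (2 ^ n + j - 1)

/-- `E` is a complementary set of the sequence `a`: a closed subset of `[0,1]`
whose complement in `[0,1]` is a disjoint union of open intervals of lengths `a_1, a_2, …`. -/
def IsComplSet (a : ℕ → ℝ) (E : Set ℝ) : Prop :=
  ∃ g : ℕ → ℝ,
    (∀ n ≥ 1, Set.Ioo (g n) (g n + a n) ⊆ Set.Icc 0 1) ∧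
    (∀ m ≥ 1, ∀ n ≥ 1, m ≠ n →
      Disjoint (Set.Ioo (g m) (g m + a m)) (Set.Ioo (g n) (g n + a n))) ∧
    E = Set.Icc 0 1 \ ⋃ n ∈ {k : ℕ | 1 ≤ k}, Set.Ioo (g n) (g n + a n)

/-- `γ_{θ,a}(r) = max{ m : s_m ≥ s_r^{1/θ} }`. -/
noncomputable def gammaIdx (a : ℕ → ℝ) (θ : ℝ) (r : ℕ) : ℕ :=
  sSup {m : ℕ | sseq a r ^ (1 / θ) ≤ sseq a m}

/-!
A node of level `n` (`2^n ≤ m < 2^(n+1)`) has length `∑_k T_k`, where `T_k` is the sum of the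
`2^k` gaps of its depth-`k` descendants, all with indices in `[2^(n+k), 2^(n+k+1))`; and `2^N s_N`
is the sum over `k` of the dyadic blocks `[2^(N+k), 2^(N+k+1))`. Since `a` is non-increasing,
`2^(n-1) T_k` is at most the shifted block `[2^(n-1+k) + 1, 2^(n+k) + 1)` and `2^(n+1) T_k` is at
least `[2^(n+1+k) - 1, 2^(n+2+k) - 1)`. The shifted blocks sum to the tails from `2^(n-1) + 1` and
`2^(n+1) - 1`, which differ from `2^(n-1) s_(n-1)` and `2^(n+1) s_(n+1)` by a single positive gap;
that gap makes both inequalities strict.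
-/

open Finset

section DecreasingCantorSet

variable {a : ℕ → ℝ}

lemma hasSum_sum_Ico_xseq (ha : 0 ≤ a) (hs : Summable a) {c : ℕ → ℕ} (hc : StrictMono c) :
    HasSum (fun k => ∑ i ∈ Ico (c k) (c (k + 1)), a i) (xseq a (c 0)) := by
  have htail : xseq a (c 0) = ∑' i, a i - ∑ i ∈ range (c 0), a i := by
    rw [← hs.sum_add_tsum_nat_add (c 0), add_sub_cancel_left]
    simp only [xseq, add_comm]
  have hpartial : ∀ K, ∑ k ∈ range K, ∑ i ∈ Ico (c k) (c (k + 1)), a i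
      = ∑ i ∈ range (c K), a i - ∑ i ∈ range (c 0), a i := fun K => by
    simp_rw [sum_Ico_eq_sub _ (hc.monotone (Nat.le_succ _))]
    exact sum_range_sub (fun k => ∑ i ∈ range (c k), a i) K
  rw [htail, hasSum_iff_tendsto_nat_of_nonneg fun k => sum_nonneg fun i _ => ha i]
  simp_rw [hpartial]
  exact (hs.hasSum.tendsto_sum_nat.comp hc.tendsto_atTop).sub_const _

lemma xseq_eq_add_xseq_succ (hs : Summable a) (n : ℕ) : xseq a n = a n + xseq a (n + 1) := by
  have hs' : Summable fun i => a (n + i) := by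
    simpa only [add_comm] using (summable_nat_add_iff n).mpr hs
  rw [xseq, hs'.tsum_eq_zero_add, add_zero, xseq]
  simp only [add_assoc, add_comm 1]

lemma card_mul_le_sum_Ico (ha : Antitone a) {p q r : ℕ} (hr : q ≤ r + 1) :
    ((q - p : ℕ) : ℝ) * a r ≤ ∑ i ∈ Ico p q, a i := by
  simpa [Nat.card_Ico] using
    card_nsmul_le_sum (Ico p q) a (a r) fun i hi => ha (by simp at hi; omega)

lemma sum_Ico_le_card_mul (ha : Antitone a) {p q r : ℕ} (hr : r ≤ p) :
    ∑ i ∈ Ico p q, a i ≤ ((q - p : ℕ) : ℝ) * a r := by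
  simpa [Nat.card_Ico] using
    sum_le_card_nsmul (Ico p q) a (a r) fun i hi => ha (by simp at hi; omega)

noncomputable def clenTerm (a : ℕ → ℝ) (m k : ℕ) : ℝ :=
  ∑ i ∈ range (2 ^ k), a (2 ^ k * m + i)

lemma clenTerm_eq_sum_Ico (m k : ℕ) :
    clenTerm a m k = ∑ i ∈ Ico (2 ^ k * m) (2 ^ k * (m + 1)), a i := by
  rw [sum_Ico_eq_sum_range, mul_add, mul_one, add_tsub_cancel_left, clenTerm]

lemma summable_clenTerm (ha : 0 ≤ a) (hs : Summable a) {m : ℕ} (hm : 1 ≤ m) :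
    Summable (clenTerm a m) := by
  have hc : StrictMono fun k => 2 ^ k * m := fun i j hij =>
    Nat.mul_lt_mul_of_pos_right (Nat.pow_lt_pow_right (by norm_num) hij) hm
  refine (hasSum_sum_Ico_xseq ha hs hc).summable.of_nonneg_of_le
    (fun k => sum_nonneg fun i _ => ha _) fun k => ?_
  rw [clenTerm_eq_sum_Ico]
  exact sum_le_sum_of_subset_of_nonneg (Ico_subset_Ico_right (by
    rw [pow_succ, mul_add, mul_one, mul_right_comm, mul_two]
    exact Nat.add_le_add_left (Nat.le_mul_of_pos_right _ hm) _))
    fun i _ _ => ha i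

lemma pow_mul_clenTerm_le (ha : Antitone a) {N m : ℕ} (hm : 2 ^ (N + 1) ≤ m) (k : ℕ) :
    2 ^ N * clenTerm a m k ≤ ∑ i ∈ Ico (2 ^ (N + k) + 1) (2 ^ (N + (k + 1)) + 1), a i := by
  have hpow : 2 ^ (N + k + 1) = 2 ^ k * 2 ^ (N + 1) := by ring
  have hterm : clenTerm a m k ≤ 2 ^ k * a (2 ^ (N + k + 1)) := by
    rw [clenTerm_eq_sum_Ico]
    convert sum_Ico_le_card_mul ha (q := 2 ^ k * (m + 1)) (hpow.trans_le
      (Nat.mul_le_mul_left _ hm)) using 2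
    rw [mul_add, mul_one, add_tsub_cancel_left]; push_cast; rfl
  have hblock := card_mul_le_sum_Ico ha (p := 2 ^ (N + k) + 1)
    (q := 2 ^ (N + (k + 1)) + 1) (r := 2 ^ (N + k + 1)) le_rfl
  have hcard : 2 ^ (N + (k + 1)) + 1 - (2 ^ (N + k) + 1) = 2 ^ (N + k) := by
    rw [← add_assoc, pow_succ]; omega
  rw [hcard] at hblock
  calc 2 ^ N * clenTerm a m k ≤ 2 ^ N * (2 ^ k * a (2 ^ (N + k + 1))) := by gcongr
    _ = ((2 ^ (N + k) : ℕ) : ℝ) * a (2 ^ (N + k + 1)) := by push_cast; ring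
    _ ≤ _ := hblock

lemma sum_Ico_le_pow_mul_clenTerm (ha : Antitone a) {M m : ℕ} (hm : m < 2 ^ M) (k : ℕ) :
    ∑ i ∈ Ico (2 ^ (M + k) - 1) (2 ^ (M + (k + 1)) - 1), a i ≤ 2 ^ M * clenTerm a m k := by
  have hone : 1 ≤ 2 ^ (M + k) := Nat.one_le_two_pow
  have hpow : 2 ^ (M + (k + 1)) = 2 * 2 ^ (M + k) := by ring
  have hblock := sum_Ico_le_card_mul ha (p := 2 ^ (M + k) - 1)
    (q := 2 ^ (M + (k + 1)) - 1) (r := 2 ^ (M + k) - 1) le_rfl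
  rw [show 2 ^ (M + (k + 1)) - 1 - (2 ^ (M + k) - 1) = 2 ^ (M + k) by omega] at hblock
  have hterm : 2 ^ k * a (2 ^ (M + k) - 1) ≤ clenTerm a m k := by
    rw [clenTerm_eq_sum_Ico]
    convert card_mul_le_sum_Ico ha (p := 2 ^ k * m) (q := 2 ^ k * (m + 1))
      (r := 2 ^ (M + k) - 1) ?_ using 2
    · rw [mul_add, mul_one, add_tsub_cancel_left]; push_cast; rfl
    · rw [Nat.sub_add_cancel hone, pow_add, mul_comm]
      exact Nat.mul_le_mul_right _ hm
  calc _ ≤ ((2 ^ (M + k) : ℕ) : ℝ) * a (2 ^ (M + k) - 1) := hblock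
    _ = 2 ^ M * (2 ^ k * a (2 ^ (M + k) - 1)) := by push_cast; ring
    _ ≤ 2 ^ M * clenTerm a m k := by gcongr

theorem clen_lt_sseq (ha : Antitone a) (hpos : ∀ i, 0 < a i) (hs : Summable a) {N m : ℕ}
    (hm : 2 ^ (N + 1) ≤ m) : clen a m < sseq a N := by
  have hc : StrictMono fun k => 2 ^ (N + k) + 1 := fun i j hij => by
    have := Nat.pow_lt_pow_right (by norm_num : 1 < 2) (Nat.add_lt_add_left hij N)
    dsimp only
    omega
  have hblocks := hasSum_sum_Ico_xseq (fun i => (hpos i).le) hs hc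
  have hle : 2 ^ N * clen a m ≤ xseq a (2 ^ N + 1) :=
    hasSum_le (pow_mul_clenTerm_le ha hm)
      ((summable_clenTerm (fun i => (hpos i).le) hs (le_trans Nat.one_le_two_pow hm)).hasSum.mul_left _)
      hblocks
  rw [sseq, lt_div_iff₀' (by positivity)]
  linarith [xseq_eq_add_xseq_succ hs (2 ^ N), hpos (2 ^ N)]

theorem sseq_lt_clen (ha : Antitone a) (hpos : ∀ i, 0 < a i) (hs : Summable a) {M m : ℕ}
    (hm₁ : 1 ≤ m) (hm : m < 2 ^ M) : sseq a M < clen a m := by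
  have hc : StrictMono fun k => 2 ^ (M + k) - 1 := fun i j hij => by
    have := Nat.pow_lt_pow_right (by norm_num : 1 < 2) (Nat.add_lt_add_left hij M)
    have : 1 ≤ 2 ^ (M + i) := Nat.one_le_two_pow
    dsimp only
    omega
  have hblocks := hasSum_sum_Ico_xseq (fun i => (hpos i).le) hs hc
  have hle : xseq a (2 ^ M - 1) ≤ 2 ^ M * clen a m :=
    hasSum_le (sum_Ico_le_pow_mul_clenTerm ha hm) hblocks
      ((summable_clenTerm (fun i => (hpos i).le) hs hm₁).hasSum.mul_left _)
  have hsplit := xseq_eq_add_xseq_succ hs (2 ^ M - 1)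
  rw [Nat.sub_add_cancel Nat.one_le_two_pow] at hsplit
  rw [sseq, div_lt_iff₀' (by positivity)]
  linarith [hpos (2 ^ M - 1)]

end DecreasingCantorSet

lemma xseq_congr {a b : ℕ → ℝ} (h : ∀ i ≥ 1, a i = b i) {n : ℕ} (hn : 1 ≤ n) :
    xseq a n = xseq b n :=
  tsum_congr fun i => h _ (by omega)

lemma sseq_congr {a b : ℕ → ℝ} (h : ∀ i ≥ 1, a i = b i) (N : ℕ) : sseq a N = sseq b N := by
  rw [sseq, sseq, xseq_congr h Nat.one_le_two_pow]

lemma clen_congr {a b : ℕ → ℝ} (h : ∀ i ≥ 1, a i = b i) {m : ℕ} (hm : 1 ≤ m) :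
    clen a m = clen b m :=
  tsum_congr fun k => sum_congr rfl fun _ _ =>
    h _ (le_add_right (hm.trans (Nat.le_mul_of_pos_left m (Nat.two_pow_pos k))))

theorem step_interval_length_bounds_general (a : ℕ → ℝ) (hpos : ∀ n ≥ 1, 0 < a n) (hmono : ∀ n ≥ 1, a (n + 1) ≤ a n)
    (hsumm : Summable fun n => a (n + 1)) :
    ∀ n ≥ 1, ∀ j, 1 ≤ j → j ≤ 2 ^ n →
      sseq a (n + 1) < clen a (2 ^ n + j - 1) ∧ clen a (2 ^ n + j - 1) < sseq a (n - 1) := by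
  intro n hn j hj₁ hj₂
  -- `a 0` is unconstrained; replacing it by `a 1` makes the sequence antitone on all of `ℕ`.
  set b : ℕ → ℝ := fun i => a (max i 1) with hb
  have hba : ∀ i ≥ 1, b i = a i := fun i hi => by simp only [hb, max_eq_left hi]
  have hb_anti : Antitone b := antitone_nat_of_succ_le fun i => by
    rcases i with _ | i
    · simp [hb]
    · simpa [hb] using hmono (i + 1) (by omega)
  have hb_pos : ∀ i, 0 < b i := fun i => hpos _ (le_max_right _ _)
  have hb_summ : Summable b := (summable_nat_add_iff 1).mp (by simpa [hb] using hsumm)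
  obtain ⟨N, rfl⟩ : ∃ N, n = N + 1 := ⟨n - 1, by omega⟩
  have hlevel : 2 ^ (N + 1 + 1) = 2 * 2 ^ (N + 1) := by ring
  have hm₁ : 1 ≤ 2 ^ (N + 1) + j - 1 := by omega
  rw [Nat.add_sub_cancel, ← sseq_congr hba, ← sseq_congr hba, ← clen_congr hba hm₁]
  exact ⟨sseq_lt_clen hb_anti hb_pos hb_summ hm₁ (by omega),
    clen_lt_sseq hb_anti hb_pos hb_summ (by omega)⟩

/-- Every closed interval `I_{n,j}` of step `n` in the construction of the decreasing
Cantor set satisfies `s_{n+1} < |I_{n,j}| < s_{n-1}`. -/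
theorem step_interval_length_bounds (a : ℕ → ℝ) (hpos : ∀ n ≥ 1, 0 < a n) (hmono : ∀ n ≥ 1, a (n + 1) ≤ a n)
    (hsumm : Summable fun n => a (n + 1)) (htot : ∑' n : ℕ, a (n + 1) = 1) :
    ∀ n ≥ 1, ∀ j, 1 ≤ j → j ≤ 2 ^ n →
      sseq a (n + 1) < clen a (2 ^ n + j - 1) ∧ clen a (2 ^ n + j - 1) < sseq a (n - 1) :=
  step_interval_length_bounds_general a hpos hmono hsumm
end

section
/- Let b = {b_n} be a positive non-increasing summable sequence that is doubling (there exists c > 0 with b_n ≤ c·b_{2n} for all n) and satisfies sup_n s_{n+1}(b)/s_n(b) < 1/2 - δ for some δ > 0. Then b_{2^n} ≍ s_n(b), i.e., there exist constants c_1, c_2 > 0 with c_1 s_n(b) ≤ b_{2^n} ≤ c_2 s_n(b) for all n. -/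
open Filter Set Topology

/-! Splitting off the first dyadic block gives `s_n = r_n + 2 s_{n+1}`, and since `b` is
non-increasing the block average `r_n` lies between `b_{2^{n+1}}` and `b_{2^n}`. The gap
hypothesis `2 s_{n+1} < (1 - 2δ) s_n` then yields `2δ s_n < r_n ≤ b_{2^n}`, while doubling gives
`b_{2^n} ≤ c b_{2^{n+1}} ≤ c r_n ≤ c s_n`. -/

section DyadicBlocks

variable {b : ℕ → ℝ}

lemma summable_nat_add_left (hb : Summable b) (n : ℕ) : Summable fun i => b (n + i) := by
  simpa only [add_comm n] using (summable_nat_add_iff n).mpr hb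

lemma xseq_eq_sum_range_add_xseq (hb : Summable b) (n k : ℕ) :
    xseq b n = ∑ i ∈ Finset.range k, b (n + i) + xseq b (n + k) := by
  rw [xseq, ← (summable_nat_add_left hb n).sum_add_tsum_nat_add k, xseq]
  simp only [add_assoc, add_comm k]

lemma xseq_pos (hb : Summable b) (hpos : ∀ n ≥ 1, 0 < b n) {n : ℕ} (hn : 1 ≤ n) :
    0 < xseq b n :=
  (summable_nat_add_left hb n).tsum_pos (fun i => (hpos _ (by omega)).le) 0
    (by simpa using hpos n hn)

lemma sseq_pos (hb : Summable b) (hpos : ∀ n ≥ 1, 0 < b n) (n : ℕ) : 0 < sseq b n :=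
  div_pos (xseq_pos hb hpos Nat.one_le_two_pow) (by positivity)

lemma sseq_eq_rseq_add_two_mul_sseq_succ (hb : Summable b) (n : ℕ) :
    sseq b n = rseq b n + 2 * sseq b (n + 1) := by
  rw [sseq, sseq, rseq, xseq_eq_sum_range_add_xseq hb (2 ^ n) (2 ^ n), ← two_mul, ← pow_succ']
  field_simp
  ring

lemma rseq_le_apply_two_pow (hanti : AntitoneOn b (Ici 1)) (n : ℕ) : rseq b n ≤ b (2 ^ n) := by
  rw [rseq, div_le_iff₀ (by positivity)]
  calc ∑ i ∈ Finset.range (2 ^ n), b (2 ^ n + i)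
      ≤ (Finset.range (2 ^ n)).card • b (2 ^ n) :=
        Finset.sum_le_card_nsmul _ _ _ fun i _ => by
          have := Nat.one_le_two_pow (n := n)
          exact hanti (mem_Ici.2 this) (mem_Ici.2 (by omega)) (by omega)
    _ = b (2 ^ n) * 2 ^ n := by simp [mul_comm]

lemma apply_two_pow_succ_le_rseq (hanti : AntitoneOn b (Ici 1)) (n : ℕ) :
    b (2 ^ (n + 1)) ≤ rseq b n := by
  rw [rseq, le_div_iff₀ (by positivity)]
  calc b (2 ^ (n + 1)) * 2 ^ n = (Finset.range (2 ^ n)).card • b (2 ^ (n + 1)) := by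
        simp [mul_comm]
    _ ≤ ∑ i ∈ Finset.range (2 ^ n), b (2 ^ n + i) :=
        Finset.card_nsmul_le_sum _ _ _ fun i hi => by
          have := Finset.mem_range.1 hi
          have := Nat.one_le_two_pow (n := n)
          exact hanti (mem_Ici.2 (by omega)) (mem_Ici.2 (by omega)) (by rw [pow_succ]; omega)

end DyadicBlocks

/-- If `b` is positive, non-increasing, summable, doubling, and
`s_{n+1}(b)/s_n(b) < 1/2 - δ` for all `n`, then `b_{2^n} ≍ s_n(b)`. -/
theorem bpow_asymp_sseq (b : ℕ → ℝ) (hpos : ∀ n ≥ 1, 0 < b n)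
    (hmono : ∀ n ≥ 1, b (n + 1) ≤ b n) (hsumm : Summable fun n => b (n + 1))
    (hdoub : ∃ c > (0:ℝ), ∀ n ≥ 1, b n ≤ c * b (2 * n))
    (δ : ℝ) (hδ : 0 < δ) (hgap : ∀ n : ℕ, sseq b (n + 1) / sseq b n < 1 / 2 - δ) :
    ∃ c₁ > (0:ℝ), ∃ c₂ > (0:ℝ), ∀ n : ℕ,
      c₁ * sseq b n ≤ b (2 ^ n) ∧ b (2 ^ n) ≤ c₂ * sseq b n := by
  obtain ⟨c, hc, hdoub⟩ := hdoub
  have hb : Summable b := (summable_nat_add_iff 1).mp hsumm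
  have hanti : AntitoneOn b (Ici 1) := antitoneOn_nat_Ici_of_succ_le hmono
  refine ⟨2 * δ, by positivity, c, hc, fun n => ⟨?_, ?_⟩⟩
  · have hsplit := sseq_eq_rseq_add_two_mul_sseq_succ hb n
    have hsucc : sseq b (n + 1) < (1 / 2 - δ) * sseq b n :=
      (div_lt_iff₀ (sseq_pos hb hpos n)).mp (hgap n)
    linarith [rseq_le_apply_two_pow hanti n]
  · calc b (2 ^ n) ≤ c * b (2 ^ (n + 1)) := by
          simpa only [pow_succ'] using hdoub (2 ^ n) Nat.one_le_two_pow
      _ ≤ c * rseq b n := by gcongr; exact apply_two_pow_succ_le_rseq hanti n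
      _ ≤ c * sseq b n := by
          gcongr
          linarith [sseq_eq_rseq_add_two_mul_sseq_succ hb n, sseq_pos hb hpos (n + 1)]
end

section
/- Let a = {a_n} be a positive non-increasing summable sequence with sum 1 and let D_a = { ∑_{i=k}^∞ a_i : k ∈ ℕ } ∪ {0}. Then for all θ ∈ [0,1], the upper θ-intermediate dimension of D_a equals θB/(1 − (1−θ)B), where B is the upper box-counting dimension of D_a. -/
/-!
Write `B` for the upper box dimension of `D_a`, `N(ρ)` for its covering numbers and
`R = θB / (1 - (1 - θ)B)`. Compare covers at scale `δ` with `ρ`-covers at `ρ = δ ^ (1 / γ)`.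

Upper bound: the gaps `a_k > 2ρ` are the first `n ≤ N(ρ)` ones, so `x_1, …, x_n` are covered
one by one by intervals of length `δ ^ (1 / θ)`, while `[0, x_{n+1}]`, in which `D_a` is
`2ρ`-dense and whose length is therefore at most `6ρN(ρ)`, is covered by intervals of length `δ`.

Lower bound, valid for any set: a cover by sets of diameters in `[δ ^ (1 / θ), δ]` produces a
`ρ`-cover of cardinality at most `(δ ^ (1 - s) / ρ + δ ^ (-s / θ)) ∑ |U_i| ^ s`.

Choosing `γ = 1 - (1 - θ)B` and `t = B + (s - R)γ / 2`, with `N(ρ) ≤ ρ ^ (-t)` eventually when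
`s > R` and `N(ρ) ≥ ρ ^ (-t)` frequently when `s < R`, every exponent in both estimates is a
multiple of `s - R` of the right sign.
-/

open Filter Set Topology

section Tails

variable {a : ℕ → ℝ}

lemma summable_shift (hsumm : Summable fun n => a (n + 1)) {k : ℕ} (hk : 1 ≤ k) :
    Summable fun i => a (k + i) := by
  obtain ⟨j, rfl⟩ := Nat.exists_eq_add_of_le hk
  exact ((summable_nat_add_iff j).2 hsumm).congr fun i => congr_arg a (by ring)

lemma xseq_succ (hsumm : Summable fun n => a (n + 1)) {k : ℕ} (hk : 1 ≤ k) :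
    xseq a k = a k + xseq a (k + 1) := by
  rw [xseq, (summable_shift hsumm hk).tsum_eq_zero_add, add_zero, xseq]
  simp only [add_right_comm k 1, add_assoc]

lemma xseq_nonneg (ha : ∀ n ≥ 1, 0 ≤ a n) {k : ℕ} (hk : 1 ≤ k) : 0 ≤ xseq a k :=
  tsum_nonneg fun _ => ha _ (by omega)

lemma add_xseq_le (ha : ∀ n ≥ 1, 0 ≤ a n) (hsumm : Summable fun n => a (n + 1))
    {j k : ℕ} (hj : 1 ≤ j) (hjk : j < k) : a j + xseq a k ≤ xseq a j := by
  induction k, hjk using Nat.le_induction with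
  | base => exact (xseq_succ hsumm hj).ge
  | succ k hk ih =>
    have := xseq_succ hsumm (k := k) (by omega)
    linarith [ha k (by omega)]

lemma xseq_le_xseq (ha : ∀ n ≥ 1, 0 ≤ a n) (hsumm : Summable fun n => a (n + 1))
    {j k : ℕ} (hj : 1 ≤ j) (hjk : j ≤ k) : xseq a k ≤ xseq a j := by
  rcases hjk.eq_or_lt with rfl | hlt
  · exact le_rfl
  · linarith [add_xseq_le ha hsumm hj hlt, ha j hj]

lemma tendsto_xseq : Tendsto (xseq a) atTop (𝓝 0) := by
  rw [← tendsto_add_atTop_iff_nat 1]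
  convert tendsto_sum_nat_add (fun n => a (n + 1)) using 2 with k
  simp only [xseq]
  exact tsum_congr fun i => by ring_nf

lemma zero_mem_Da : (0 : ℝ) ∈ Da a := Or.inl rfl

lemma xseq_mem_Da {k : ℕ} (hk : 1 ≤ k) : xseq a k ∈ Da a := Or.inr ⟨k, hk, rfl⟩

lemma Da_countable : (Da a).Countable :=
  (countable_singleton 0).union <| (countable_range (xseq a)).mono <| by
    rintro _ ⟨k, -, rfl⟩
    exact ⟨k, rfl⟩

lemma Da_subset_Icc (ha : ∀ n ≥ 1, 0 ≤ a n) (hsumm : Summable fun n => a (n + 1))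
    (htot : ∑' n : ℕ, a (n + 1) = 1) : Da a ⊆ Icc 0 1 := by
  have hone : xseq a 1 = 1 := by
    rw [← htot, xseq]
    simp only [add_comm 1]
  rintro _ (rfl | ⟨k, hk, rfl⟩)
  · exact ⟨le_rfl, zero_le_one⟩
  · exact ⟨xseq_nonneg ha hk, hone ▸ xseq_le_xseq ha hsumm le_rfl hk⟩

lemma exists_threshold (hmono : ∀ n ≥ 1, a (n + 1) ≤ a n) (hlim : Tendsto a atTop (𝓝 0))
    {r : ℝ} (hr : 0 < r) :
    ∃ n, (∀ k, 1 ≤ k → k ≤ n → r < a k) ∧ ∀ k, n < k → a k ≤ r := by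
  classical
  have hex : ∃ n, a (n + 1) ≤ r := by
    obtain ⟨N, hN⟩ := (hlim.eventually (ge_mem_nhds hr)).exists_forall_of_atTop
    exact ⟨N, hN _ (by omega)⟩
  have hanti : ∀ m k, 1 ≤ m → m ≤ k → a k ≤ a m := fun m k hm hmk => by
    induction k, hmk using Nat.le_induction with
    | base => exact le_rfl
    | succ k hk ih => exact (hmono k (by omega)).trans ih
  refine ⟨Nat.find hex, fun k hk hkn => ?_, fun k hk => ?_⟩
  · have := Nat.find_min hex (show k - 1 < Nat.find hex by omega)
    rwa [Nat.sub_add_cancel hk, not_le] at this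
  · exact (hanti _ k (by omega) hk).trans (Nat.find_spec hex)

end Tails

lemma coverNum_le_card {F : Set ℝ} {δ : ℝ} {S : Finset ℝ}
    (h : F ⊆ ⋃ x ∈ S, Metric.closedBall x δ) : coverNum F δ ≤ S.card :=
  Nat.sInf_le ⟨S, rfl, h⟩

lemma Icc_subset_biUnion_Icc {c L δ : ℝ} (hδ : 0 < δ) :
    Icc c (c + L) ⊆
      ⋃ i ∈ Finset.range (⌊L / δ⌋₊ + 1), Icc (c + i * δ) (c + i * δ + δ) := by
  intro y ⟨hcy, hyL⟩
  have hq : 0 ≤ (y - c) / δ := div_nonneg (by linarith) hδ.le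
  refine mem_iUnion₂.2 ⟨⌊(y - c) / δ⌋₊, ?_, ?_, ?_⟩
  · rw [Finset.mem_range, Nat.lt_succ_iff]
    exact Nat.floor_mono (by gcongr; linarith)
  · linarith [(le_div_iff₀ hδ).1 (Nat.floor_le hq)]
  · linarith [(div_lt_iff₀ hδ).1 (Nat.lt_floor_add_one ((y - c) / δ))]

lemma exists_finset_cover_Icc {c L δ : ℝ} (hL : 0 ≤ L) (hδ : 0 < δ) :
    ∃ S : Finset ℝ, (S.card : ℝ) ≤ L / (2 * δ) + 1 ∧
      Icc c (c + L) ⊆ ⋃ x ∈ S, Metric.closedBall x δ := by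
  classical
  refine ⟨(Finset.range (⌊L / (2 * δ)⌋₊ + 1)).image fun i : ℕ => c + i * (2 * δ) + δ,
    ?_, ?_⟩
  · calc (_ : ℝ) ≤ (⌊L / (2 * δ)⌋₊ + 1 : ℕ) := by
          exact_mod_cast Finset.card_image_le.trans (Finset.card_range _).le
      _ ≤ L / (2 * δ) + 1 := by
          push_cast
          linarith [Nat.floor_le (by positivity : 0 ≤ L / (2 * δ))]
  · refine (Icc_subset_biUnion_Icc (L := L) (by positivity : 0 < 2 * δ)).trans
      (iUnion₂_subset fun i hi => ?_)
    have hball : Icc (c + i * (2 * δ)) (c + i * (2 * δ) + 2 * δ) =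
        Metric.closedBall (c + i * (2 * δ) + δ) δ := by
      rw [Real.closedBall_eq_Icc]; ring_nf
    rw [hball]
    exact subset_biUnion_of_mem (u := fun x => Metric.closedBall x δ)
      (Finset.mem_image_of_mem _ hi)

lemma exists_card_eq_coverNum {F : Set ℝ} (hF : F ⊆ Icc 0 1) {δ : ℝ} (hδ : 0 < δ) :
    ∃ S : Finset ℝ, S.card = coverNum F δ ∧ F ⊆ ⋃ x ∈ S, Metric.closedBall x δ := by
  obtain ⟨S, -, hS⟩ := exists_finset_cover_Icc (c := 0) zero_le_one hδ
  have hmem : S.card ∈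
      {n : ℕ | ∃ S : Finset ℝ, S.card = n ∧ F ⊆ ⋃ x ∈ S, Metric.closedBall x δ} :=
    ⟨S, rfl, hF.trans (by simpa using hS)⟩
  exact Nat.sInf_mem ⟨_, hmem⟩

lemma coverNum_le_of_subset_Icc {F : Set ℝ} (hF : F ⊆ Icc 0 1) {δ : ℝ} (hδ : 0 < δ) :
    (coverNum F δ : ℝ) ≤ 1 / (2 * δ) + 1 := by
  obtain ⟨S, hcard, hS⟩ := exists_finset_cover_Icc (c := 0) zero_le_one hδ
  exact le_trans (by exact_mod_cast coverNum_le_card (hF.trans (by simpa using hS))) hcard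

lemma coverNum_pos {F : Set ℝ} (hF : F ⊆ Icc 0 1) (hne : F.Nonempty) {δ : ℝ} (hδ : 0 < δ) :
    0 < coverNum F δ := by
  obtain ⟨S, hcard, hS⟩ := exists_card_eq_coverNum hF hδ
  obtain ⟨y, hy⟩ := hne
  obtain ⟨x, hx, -⟩ := mem_iUnion₂.1 (hS hy)
  exact hcard ▸ Finset.card_pos.2 ⟨x, hx⟩

lemma coverNum_le_sum {F : Set ℝ} {ρ : ℝ} (hρ : 0 < ρ) {I : Finset ℕ} {U : ℕ → Set ℝ}
    (hcov : F ⊆ ⋃ i ∈ I, U i) (hU : ∀ i ∈ I, Bornology.IsBounded (U i)) :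
    (coverNum F ρ : ℝ) ≤ ∑ i ∈ I, (Metric.diam (U i) / (2 * ρ) + 1) := by
  classical
  have hcovU : ∀ i ∈ I, ∃ S : Finset ℝ,
      (S.card : ℝ) ≤ Metric.diam (U i) / (2 * ρ) + 1 ∧
        U i ⊆ ⋃ x ∈ S, Metric.closedBall x ρ := fun i hi => by
    obtain ⟨S, hcard, hS⟩ := exists_finset_cover_Icc (c := sInf (U i))
      (Metric.diam_nonneg (s := U i)) hρ
    refine ⟨S, hcard, ((hU i hi).subset_Icc_sInf_sSup).trans (hS.trans' ?_)⟩
    rw [Real.diam_eq (hU i hi), add_sub_cancel]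
  choose! S hcard hS using hcovU
  calc (coverNum F ρ : ℝ) ≤ (I.biUnion S).card := by
        refine Nat.cast_le.2 (coverNum_le_card (hcov.trans (iUnion₂_subset fun i hi => ?_)))
        rw [Finset.set_biUnion_biUnion]
        exact (hS i hi).trans
          (subset_biUnion_of_mem (u := fun j => ⋃ x ∈ S j, Metric.closedBall x ρ) hi)
    _ ≤ ∑ i ∈ I, ((S i).card : ℝ) := by exact_mod_cast Finset.card_biUnion_le
    _ ≤ _ := Finset.sum_le_sum hcard

lemma card_le_coverNum {ι : Type*} {F : Set ℝ} (hF : F ⊆ Icc 0 1) {ρ : ℝ} (hρ : 0 < ρ)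
    {s : Finset ι} {f : ι → ℝ} (hf : ∀ i ∈ s, f i ∈ F)
    (hsep : ∀ i ∈ s, ∀ j ∈ s, i ≠ j → 2 * ρ < |f i - f j|) :
    s.card ≤ coverNum F ρ := by
  obtain ⟨S, hcard, hS⟩ := exists_card_eq_coverNum hF hρ
  have hcenter : ∀ i ∈ s, ∃ c ∈ S, |f i - c| ≤ ρ := fun i hi => by
    simpa [Real.dist_eq] using hS (hf i hi)
  choose! c hcS hcd using hcenter
  refine hcard ▸ Finset.card_le_card_of_injOn c hcS fun i hi j hj hij => ?_
  by_contra hne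
  refine (hsep i hi j hj hne).not_ge ?_
  calc |f i - f j| ≤ |f i - c i| + |c i - f j| := abs_sub_le _ _ _
    _ = |f i - c i| + |f j - c j| := by rw [hij, abs_sub_comm (c j)]
    _ ≤ 2 * ρ := by linarith [hcd i hi, hcd j hj]

lemma le_card_mul_of_Icc_subset {L r : ℝ} (hr : 0 ≤ r) {S : Finset ℝ}
    (h : Icc 0 L ⊆ ⋃ c ∈ S, Metric.closedBall c r) : L ≤ S.card * (2 * r) := by
  open MeasureTheory in
  have hvol : ENNReal.ofReal L ≤ ENNReal.ofReal (S.card * (2 * r)) :=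
    calc ENNReal.ofReal L = volume (Icc 0 L) := by rw [Real.volume_Icc, sub_zero]
      _ ≤ ∑ c ∈ S, volume (Metric.closedBall c r) :=
        (measure_mono h).trans (measure_biUnion_finset_le S _)
      _ = ENNReal.ofReal (S.card * (2 * r)) := by
        simp [Real.volume_closedBall, ENNReal.ofReal_mul]
  exact (ENNReal.ofReal_le_ofReal_iff (by positivity)).1 hvol

section DaStructure

variable {a : ℕ → ℝ}

lemma exists_mem_Da_near (hsumm : Summable fun n => a (n + 1))
    {n : ℕ} {r : ℝ} (hr : 0 ≤ r) (hgap : ∀ k, n < k → a k ≤ r) {y : ℝ}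
    (hy : y ∈ Icc 0 (xseq a (n + 1))) : ∃ z ∈ Da a, |y - z| ≤ r := by
  classical
  by_cases hex : ∃ j, xseq a (n + 1 + j) ≤ y
  · obtain ⟨j, hjy, hjmin⟩ :
        ∃ j, xseq a (n + 1 + j) ≤ y ∧ ∀ i < j, y < xseq a (n + 1 + i) :=
      ⟨Nat.find hex, Nat.find_spec hex, fun i hi => not_le.1 (Nat.find_min hex hi)⟩
    refine ⟨_, xseq_mem_Da (k := n + 1 + j) (by omega), ?_⟩
    rw [abs_of_nonneg (sub_nonneg.2 hjy)]
    cases j with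
    | zero => linarith [hy.2]
    | succ i =>
      have := xseq_succ hsumm (k := n + 1 + i) (by omega)
      rw [← add_assoc] at hjy ⊢
      linarith [hjmin i i.lt_succ_self, hgap (n + 1 + i) (by omega)]
  · refine ⟨0, zero_mem_Da, ?_⟩
    simp only [not_exists, not_le] at hex
    have hy0 : y ≤ 0 := ge_of_tendsto tendsto_xseq <| (eventually_ge_atTop (n + 1)).mono
      fun k hk => by obtain ⟨j, rfl⟩ := Nat.exists_eq_add_of_le hk; exact (hex j).le
    rw [le_antisymm hy0 hy.1, sub_zero, abs_zero]
    exact hr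

lemma Da_subset_Icc_union (ha : ∀ n ≥ 1, 0 ≤ a n) (hsumm : Summable fun n => a (n + 1))
    (n : ℕ) : Da a ⊆ Icc 0 (xseq a (n + 1)) ∪ (fun k => xseq a (k + 1)) '' Iio n := by
  rintro _ (rfl | ⟨k, hk, rfl⟩)
  · exact Or.inl ⟨le_rfl, xseq_nonneg ha (by omega)⟩
  · rcases le_or_gt k n with hkn | hnk
    · exact Or.inr ⟨k - 1, by simp only [mem_Iio]; omega, by simp only [Nat.sub_add_cancel hk]⟩
    · exact Or.inl ⟨xseq_nonneg ha hk, xseq_le_xseq ha hsumm (by omega) hnk⟩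

lemma le_coverNum_Da (ha : ∀ n ≥ 1, 0 ≤ a n) (hsumm : Summable fun n => a (n + 1))
    (htot : ∑' n : ℕ, a (n + 1) = 1) {n : ℕ} {ρ : ℝ} (hρ : 0 < ρ)
    (hbig : ∀ k, 1 ≤ k → k ≤ n → 2 * ρ < a k) : n ≤ coverNum (Da a) ρ := by
  have hsep : ∀ i j, i < j → j < n → 2 * ρ < xseq a (i + 1) - xseq a (j + 1) := by
    intro i j hij hjn
    linarith [add_xseq_le ha hsumm (j := i + 1) (k := j + 1) (by omega) (by omega),
      hbig (i + 1) (by omega) (by omega)]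
  simpa using card_le_coverNum (Da_subset_Icc ha hsumm htot) hρ (s := Finset.range n)
    (f := fun k => xseq a (k + 1)) (fun k _ => xseq_mem_Da (by omega)) fun i hi j hj hij => by
      simp only [Finset.mem_range] at hi hj
      rcases hij.lt_or_gt with h | h
      · exact (hsep i j h hj).trans_le (le_abs_self _)
      · exact (hsep j i h hi).trans_le (by rw [abs_sub_comm]; exact le_abs_self _)

lemma xseq_le_coverNum_Da (ha : ∀ n ≥ 1, 0 ≤ a n) (hsumm : Summable fun n => a (n + 1))
    (htot : ∑' n : ℕ, a (n + 1) = 1) {n : ℕ} {ρ : ℝ} (hρ : 0 < ρ)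
    (hgap : ∀ k, n < k → a k ≤ 2 * ρ) : xseq a (n + 1) ≤ 6 * ρ * coverNum (Da a) ρ := by
  obtain ⟨S, hcard, hS⟩ := exists_card_eq_coverNum (Da_subset_Icc ha hsumm htot) hρ
  have hcov : Icc 0 (xseq a (n + 1)) ⊆ ⋃ c ∈ S, Metric.closedBall c (3 * ρ) := fun y hy => by
    obtain ⟨z, hz, hyz⟩ := exists_mem_Da_near hsumm (by positivity) hgap hy
    obtain ⟨c, hc, hzc⟩ := mem_iUnion₂.1 (hS hz)
    refine mem_iUnion₂.2 ⟨c, hc, ?_⟩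
    rw [Metric.mem_closedBall] at hzc ⊢
    linarith [dist_triangle y z c, show dist y z = |y - z| from rfl]
  have := le_card_mul_of_Icc_subset (by positivity) hcov
  rw [hcard] at this
  linarith

end DaStructure

def CoverableAtScale (θ s δ ε : ℝ) (F : Set ℝ) : Prop :=
  ∃ (I : Finset ℕ) (U : ℕ → Set ℝ), (F ⊆ ⋃ i ∈ I, U i) ∧
    (∀ i ∈ I, δ ^ (1 / θ) ≤ Metric.diam (U i) ∧ Metric.diam (U i) ≤ δ) ∧
    ∑ i ∈ I, Metric.diam (U i) ^ s ≤ ε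

lemma CoverableAtScale.mono {θ s δ ε ε' : ℝ} {F : Set ℝ} (h : CoverableAtScale θ s δ ε F)
    (hε : ε ≤ ε') : CoverableAtScale θ s δ ε' F :=
  let ⟨I, U, hcov, hdiam, hsum⟩ := h
  ⟨I, U, hcov, hdiam, hsum.trans hε⟩

def UpperIntDimAdmissible (θ : ℝ) (F : Set ℝ) (s : ℝ) : Prop :=
  0 ≤ s ∧ ∀ ε > 0, ∀ᶠ δ in 𝓝[>] 0, CoverableAtScale θ s δ ε F

lemma upperIntDim_eq_sInf {θ : ℝ} (hθ : θ ≠ 0) (F : Set ℝ) :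
    upperIntDim θ F = sInf {s | UpperIntDimAdmissible θ F s} := by
  rw [upperIntDim, if_neg hθ]
  congr 1
  ext s
  refine and_congr_right fun _ => forall₂_congr fun ε _ => ?_
  rw [eventually_iff, mem_nhdsGT_iff_exists_Ioc_subset]
  simp only [CoverableAtScale, subset_def, mem_Ioc, mem_ofPred_eq, and_imp]
  rfl

lemma coverableAtScale_of_subset {F : Set ℝ} {θ s δ X : ℝ} {n : ℕ} {p : ℕ → ℝ}
    (hδ : 0 < δ) (hηδ : δ ^ (1 / θ) ≤ δ) (hX : 0 ≤ X)
    (hF : F ⊆ Icc 0 X ∪ p '' Iio n) :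
    CoverableAtScale θ s δ ((X / δ + 1) * δ ^ s + n * (δ ^ (1 / θ)) ^ s) F := by
  set η := δ ^ (1 / θ)
  have hη : 0 < η := Real.rpow_pos_of_pos hδ _
  set m := ⌊X / δ⌋₊ + 1
  have hm : (m : ℝ) ≤ X / δ + 1 := by
    push_cast [m]; linarith [Nat.floor_le (div_nonneg hX hδ.le)]
  let U : ℕ → Set ℝ := fun i =>
    if i < m then Icc (i * δ) (i * δ + δ) else Icc (p (i - m)) (p (i - m) + η)
  have hUlt : ∀ i < m, Metric.diam (U i) = δ := fun i hi => by
    simp only [U, if_pos hi, Real.diam_Icc (by linarith : i * δ ≤ i * δ + δ),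
      add_sub_cancel_left]
  have hUge : ∀ i, m ≤ i → Metric.diam (U i) = η := fun i hi => by
    simp only [U, if_neg (not_lt.2 hi), Real.diam_Icc (by linarith : p (i - m) ≤ p (i - m) + η),
      add_sub_cancel_left]
  refine ⟨Finset.range (m + n), U, fun y hy => ?_, fun i _ => ?_, ?_⟩
  · rcases hF hy with hy | ⟨k, hk, rfl⟩
    · obtain ⟨i, hi, hyi⟩ :=
        mem_iUnion₂.1 (Icc_subset_biUnion_Icc (c := 0) hδ (by simpa using hy))
      have him : i < m := Finset.mem_range.1 hi
      refine mem_iUnion₂.2 ⟨i, Finset.mem_range.2 (by omega), ?_⟩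
      simpa only [U, if_pos him, zero_add] using hyi
    · rw [mem_Iio] at hk
      refine mem_iUnion₂.2 ⟨m + k, Finset.mem_range.2 (by omega), ?_⟩
      simp [U, hη.le]
  · rcases lt_or_ge i m with hi | hi
    · rw [hUlt i hi]; exact ⟨hηδ, le_rfl⟩
    · rw [hUge i hi]; exact ⟨le_rfl, hηδ⟩
  · have hsum_lt : ∑ i ∈ Finset.range m, Metric.diam (U i) ^ s = m * δ ^ s := by
      rw [Finset.sum_congr rfl fun i hi => by rw [hUlt i (Finset.mem_range.1 hi)]]
      simp
    have hsum_ge : ∑ i ∈ Finset.range n, Metric.diam (U (m + i)) ^ s = n * η ^ s := by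
      rw [Finset.sum_congr rfl fun i _ => by rw [hUge (m + i) (by omega)]]
      simp
    rw [Finset.sum_range_add, hsum_lt, hsum_ge]
    gcongr

lemma div_add_one_le_mul_rpow {d η δ r s : ℝ} (hη : 0 < η) (hηd : η ≤ d) (hdδ : d ≤ δ)
    (hr : 0 < r) (hs0 : 0 ≤ s) (hs1 : s ≤ 1) :
    d / r + 1 ≤ (δ ^ (1 - s) / r + η ^ (-s)) * d ^ s := by
  have hd : 0 < d := hη.trans_le hηd
  have h1 : d ≤ δ ^ (1 - s) * d ^ s :=
    calc d = d ^ (1 - s) * d ^ s := by rw [← Real.rpow_add hd]; norm_num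
      _ ≤ δ ^ (1 - s) * d ^ s := by gcongr
  have h2 : 1 ≤ η ^ (-s) * d ^ s :=
    calc (1 : ℝ) = η ^ (-s) * η ^ s := by rw [← Real.rpow_add hη]; norm_num
      _ ≤ η ^ (-s) * d ^ s := by gcongr
  calc d / r + 1 ≤ δ ^ (1 - s) * d ^ s / r + η ^ (-s) * d ^ s := by gcongr
    _ = _ := by ring

lemma coverNum_le_of_coverableAtScale {F : Set ℝ} {θ s δ ε ρ : ℝ} (hδ : 0 < δ)
    (hρ : 0 < ρ) (hs0 : 0 ≤ s) (hs1 : s ≤ 1) (h : CoverableAtScale θ s δ ε F) :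
    (coverNum F ρ : ℝ) ≤ (δ ^ (1 - s) / (2 * ρ) + (δ ^ (1 / θ)) ^ (-s)) * ε := by
  obtain ⟨I, U, hcov, hdiam, hsum⟩ := h
  have hη : 0 < δ ^ (1 / θ) := Real.rpow_pos_of_pos hδ _
  have hbdd : ∀ i ∈ I, Bornology.IsBounded (U i) := fun i hi => by
    by_contra hunb
    linarith [(hdiam i hi).1, Metric.diam_eq_zero_of_unbounded hunb]
  calc (coverNum F ρ : ℝ) ≤ ∑ i ∈ I, (Metric.diam (U i) / (2 * ρ) + 1) :=
        coverNum_le_sum hρ hcov hbdd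
    _ ≤ ∑ i ∈ I, (δ ^ (1 - s) / (2 * ρ) + (δ ^ (1 / θ)) ^ (-s)) * Metric.diam (U i) ^ s :=
      Finset.sum_le_sum fun i hi =>
        div_add_one_le_mul_rpow hη (hdiam i hi).1 (hdiam i hi).2 (by positivity) hs0 hs1
    _ ≤ _ := by rw [← Finset.mul_sum]; gcongr

section BoxDimension

variable {F : Set ℝ}

lemma log_div_neg_log_le_iff {x δ t : ℝ} (hx : 0 < x) (hδ0 : 0 < δ) (hδ1 : δ < 1) :
    Real.log x / -Real.log δ ≤ t ↔ x ≤ δ ^ (-t) := by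
  rw [div_le_iff₀ (neg_pos.2 (Real.log_neg hδ0 hδ1)),
    ← Real.log_le_log_iff hx (Real.rpow_pos_of_pos hδ0 _), Real.log_rpow hδ0]
  ring_nf

lemma eventually_boxDimRatio_mem_Icc (hF : F ⊆ Icc 0 1) (hne : F.Nonempty) :
    ∀ᶠ δ in 𝓝[>] 0, Real.log (coverNum F δ) / -Real.log δ ∈ Icc 0 1 := by
  filter_upwards [Ioc_mem_nhdsGT (by norm_num : (0 : ℝ) < 1 / 2)] with δ ⟨hδ0, hδ⟩
  have hN : (0 : ℝ) < coverNum F δ := by exact_mod_cast coverNum_pos hF hne hδ0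
  refine ⟨div_nonneg (Real.log_nonneg (by exact_mod_cast coverNum_pos hF hne hδ0))
    (neg_nonneg.2 (Real.log_nonpos hδ0.le (by linarith))), ?_⟩
  rw [log_div_neg_log_le_iff hN hδ0 (by linarith), Real.rpow_neg_one]
  have : 1 / (2 * δ) + 1 ≤ δ⁻¹ := by
    rw [inv_eq_one_div, div_add_one (by positivity), div_le_div_iff₀ (by positivity) hδ0]
    nlinarith
  exact (coverNum_le_of_subset_Icc hF hδ0).trans this

lemma upperBoxDim_mem_Icc (hF : F ⊆ Icc 0 1) (hne : F.Nonempty) : upperBoxDim F ∈ Icc 0 1 := by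
  have h := eventually_boxDimRatio_mem_Icc hF hne
  exact ⟨le_limsup_of_frequently_le (h.mono fun _ hδ => hδ.1).frequently
      ⟨1, h.mono fun _ hδ => hδ.2⟩,
    limsup_le_of_le (isCoboundedUnder_le_of_eventually_le _ (h.mono fun _ hδ => hδ.1))
      (h.mono fun _ hδ => hδ.2)⟩

lemma eventually_coverNum_le_rpow (hF : F ⊆ Icc 0 1) (hne : F.Nonempty) {t : ℝ}
    (ht : upperBoxDim F < t) : ∀ᶠ δ in 𝓝[>] 0, (coverNum F δ : ℝ) ≤ δ ^ (-t) := by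
  have hbdd := eventually_boxDimRatio_mem_Icc hF hne
  filter_upwards [eventually_lt_of_limsup_lt ht ⟨1, hbdd.mono fun _ hδ => hδ.2⟩,
    Ioo_mem_nhdsGT zero_lt_one] with δ hlt ⟨hδ0, hδ1⟩
  exact (log_div_neg_log_le_iff (by exact_mod_cast coverNum_pos hF hne hδ0) hδ0 hδ1).1 hlt.le

lemma frequently_rpow_le_coverNum (hF : F ⊆ Icc 0 1) (hne : F.Nonempty) {t : ℝ}
    (ht : t < upperBoxDim F) : ∃ᶠ δ in 𝓝[>] 0, δ ^ (-t) ≤ (coverNum F δ : ℝ) := by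
  have hbdd := eventually_boxDimRatio_mem_Icc hF hne
  refine (frequently_lt_of_lt_limsup (isCoboundedUnder_le_of_eventually_le _
    (hbdd.mono fun _ hδ => hδ.1)) ht).mp ?_
  filter_upwards [Ioo_mem_nhdsGT zero_lt_one] with δ ⟨hδ0, hδ1⟩ hlt
  exact (not_le.1 (mt (log_div_neg_log_le_iff (by exact_mod_cast coverNum_pos hF hne hδ0)
    hδ0 hδ1).2 (not_le.2 hlt))).le

end BoxDimension

lemma tendsto_rpow_nhdsGT_zero {p : ℝ} (hp : 0 < p) :
    Tendsto (fun x : ℝ => x ^ p) (𝓝[>] 0) (𝓝 0) :=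
  (tendsto_id.mono_left nhdsWithin_le_nhds).rpow_const_nhds_zero hp

lemma tendsto_rpow_nhdsGT_zero_nhdsGT {p : ℝ} (hp : 0 < p) :
    Tendsto (fun x : ℝ => x ^ p) (𝓝[>] 0) (𝓝[>] 0) :=
  tendsto_nhdsWithin_iff.2 ⟨tendsto_rpow_nhdsGT_zero hp,
    eventually_mem_nhdsWithin.mono fun _ hx => Real.rpow_pos_of_pos hx p⟩

lemma eventually_nhdsGT_zero_of_rpow {P : ℝ → Prop} {γ : ℝ} (hγ : 0 < γ)
    (h : ∀ᶠ ρ in 𝓝[>] 0, P (ρ ^ γ)) : ∀ᶠ δ in 𝓝[>] 0, P δ := by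
  filter_upwards [(tendsto_rpow_nhdsGT_zero_nhdsGT (inv_pos.2 hγ)).eventually h,
    eventually_mem_nhdsWithin] with δ hδ hδ0
  rwa [← Real.rpow_mul (le_of_lt hδ0), inv_mul_cancel₀ hγ.ne', Real.rpow_one] at hδ

section IntermediateDimension

variable {a : ℕ → ℝ} {θ s t γ : ℝ}

lemma upperIntDimAdmissible_Da (ha : ∀ n ≥ 1, 0 ≤ a n)
    (hmono : ∀ n ≥ 1, a (n + 1) ≤ a n) (hsumm : Summable fun n => a (n + 1))
    (htot : ∑' n : ℕ, a (n + 1) = 1)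
    (hθ0 : 0 < θ) (hθ1 : θ ≤ 1) (hs : 0 < s) (hγ : 0 < γ)
    (hp₁ : 0 < 1 - t - γ * (1 - s)) (hp₂ : 0 < γ * s / θ - t)
    (hN : ∀ᶠ ρ in 𝓝[>] 0, (coverNum (Da a) ρ : ℝ) ≤ ρ ^ (-t)) :
    UpperIntDimAdmissible θ (Da a) s := by
  refine ⟨hs.le, fun ε hε => eventually_nhdsGT_zero_of_rpow hγ ?_⟩
  have hlim : Tendsto (fun ρ : ℝ => 6 * ρ ^ (1 - t - γ * (1 - s)) + ρ ^ (γ * s) +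
      ρ ^ (γ * s / θ - t)) (𝓝[>] 0) (𝓝 0) := by
    simpa using ((tendsto_rpow_nhdsGT_zero hp₁).const_mul 6).add
      (tendsto_rpow_nhdsGT_zero (by positivity)) |>.add (tendsto_rpow_nhdsGT_zero hp₂)
  filter_upwards [hN, hlim.eventually (ge_mem_nhds hε), Ioc_mem_nhdsGT zero_lt_one]
    with ρ hNρ hsmall ⟨hρ0, hρ1⟩
  set δ := ρ ^ γ
  have hδ : 0 < δ := Real.rpow_pos_of_pos hρ0 γ
  have hηδ : δ ^ (1 / θ) ≤ δ := by
    simpa using Real.rpow_le_rpow_of_exponent_ge hδ (Real.rpow_le_one hρ0.le hρ1 hγ.le)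
      (one_le_one_div hθ0 hθ1)
  obtain ⟨n, hbig, hgap⟩ := exists_threshold hmono
    ((tendsto_add_atTop_iff_nat 1).1 hsumm.tendsto_atTop_zero) (by positivity : 0 < 2 * ρ)
  have hn : (n : ℝ) ≤ ρ ^ (-t) :=
    le_trans (by exact_mod_cast le_coverNum_Da ha hsumm htot hρ0 hbig) hNρ
  have hX : xseq a (n + 1) ≤ 6 * ρ ^ (1 - t) := by
    calc xseq a (n + 1) ≤ 6 * ρ * coverNum (Da a) ρ :=
          xseq_le_coverNum_Da ha hsumm htot hρ0 hgap
      _ ≤ 6 * ρ * ρ ^ (-t) := by gcongr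
      _ = 6 * ρ ^ (1 - t) := by rw [sub_eq_add_neg, Real.rpow_add hρ0, Real.rpow_one]; ring
  refine (coverableAtScale_of_subset hδ hηδ (xseq_nonneg ha (by omega))
    (Da_subset_Icc_union ha hsumm n)).mono (le_trans ?_ hsmall)
  calc (xseq a (n + 1) / δ + 1) * δ ^ s + n * (δ ^ (1 / θ)) ^ s
      ≤ (6 * ρ ^ (1 - t) / δ + 1) * δ ^ s + ρ ^ (-t) * (δ ^ (1 / θ)) ^ s := by gcongr
    _ = 6 * (ρ ^ (1 - t) / ρ ^ γ * (ρ ^ γ) ^ s) + (ρ ^ γ) ^ s +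
        ρ ^ (-t) * ((ρ ^ γ) ^ (1 / θ)) ^ s := by ring
    _ = _ := by
      rw [← Real.rpow_sub hρ0, ← Real.rpow_mul hρ0.le, ← Real.rpow_mul hρ0.le,
        ← Real.rpow_mul hρ0.le, ← Real.rpow_add hρ0, ← Real.rpow_add hρ0]
      ring_nf

lemma not_upperIntDimAdmissible {F : Set ℝ} (hs0 : 0 ≤ s) (hs1 : s ≤ 1)
    (hγ : 0 < γ) (hp₁ : 1 - t - γ * (1 - s) < 0) (hp₂ : γ * s / θ - t < 0)
    (hN : ∃ᶠ ρ in 𝓝[>] 0, ρ ^ (-t) ≤ (coverNum F ρ : ℝ)) :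
    ¬ UpperIntDimAdmissible θ F s := by
  rintro ⟨-, h⟩
  have hlim : Tendsto
      (fun ρ : ℝ => ρ ^ (-(1 - t - γ * (1 - s))) / 2 + ρ ^ (-(γ * s / θ - t)))
      (𝓝[>] 0) (𝓝 0) := by
    simpa using ((tendsto_rpow_nhdsGT_zero (neg_pos.2 hp₁)).div_const 2).add
      (tendsto_rpow_nhdsGT_zero (neg_pos.2 hp₂))
  obtain ⟨ρ, hNρ, hcov, hsmall, hρ0 : 0 < ρ⟩ := (hN.and_eventually
    (((tendsto_rpow_nhdsGT_zero_nhdsGT hγ).eventually (h 1 one_pos)).and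
      ((hlim.eventually (gt_mem_nhds one_pos)).and eventually_mem_nhdsWithin))).exists
  have hbound := coverNum_le_of_coverableAtScale (Real.rpow_pos_of_pos hρ0 γ) hρ0 hs0 hs1 hcov
  have key : ρ ^ (-t) ≤ ρ ^ (γ * (1 - s) - 1) / 2 + ρ ^ (-(γ * s / θ)) := by
    refine hNρ.trans (hbound.trans_eq ?_)
    simp only [← Real.rpow_mul hρ0.le, mul_one, div_mul_eq_div_div, Real.rpow_sub hρ0,
      Real.rpow_one]
    ring_nf
  have : 1 ≤ ρ ^ (-(1 - t - γ * (1 - s))) / 2 + ρ ^ (-(γ * s / θ - t)) := by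
    calc (1 : ℝ) = ρ ^ (-t) * ρ ^ t := by rw [← Real.rpow_add hρ0]; simp
      _ ≤ (ρ ^ (γ * (1 - s) - 1) / 2 + ρ ^ (-(γ * s / θ))) * ρ ^ t := by gcongr
      _ = _ := by
        rw [add_mul, div_mul_eq_mul_div, ← Real.rpow_add hρ0, ← Real.rpow_add hρ0]
        ring_nf
  linarith

end IntermediateDimension

lemma sInf_eq_of_Ioi_subset_of_subset_Ici {S : Set ℝ} {R : ℝ} (hIoi : Ioi R ⊆ S)
    (hIci : S ⊆ Ici R) : sInf S = R :=
  IsGLB.csInf_eq ⟨fun _ hs => hIci hs, fun _ hb =>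
    le_of_forall_gt_imp_ge_of_dense fun _ hc => hb (hIoi hc)⟩ ⟨R + 1, hIoi (by simp)⟩

lemma intDim_exponents {θ B D R s : ℝ} (hθ : θ ≠ 0) (hD : D = 1 - (1 - θ) * B)
    (hR : R * D = θ * B) :
    1 - (B + (s - R) * D / 2) - D * (1 - s) = (s - R) * D / 2 ∧
      D * s / θ - (B + (s - R) * D / 2) = (s - R) * D * (1 / θ - 1 / 2) := by
  constructor
  · linear_combination -hD + hR
  · field_simp
    linear_combination 2 * hR

/-- `\overline{dim}_θ D_a = θB / (1 - (1-θ)B)` where `B` is the upper box dimension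
of `D_a`. -/
theorem upperIntDim_Da (a : ℕ → ℝ) (hpos : ∀ n ≥ 1, 0 < a n) (hmono : ∀ n ≥ 1, a (n + 1) ≤ a n)
    (hsumm : Summable fun n => a (n + 1)) (htot : ∑' n : ℕ, a (n + 1) = 1) :
    ∀ θ ∈ Set.Icc (0:ℝ) 1,
      upperIntDim θ (Da a) =
        θ * upperBoxDim (Da a) / (1 - (1 - θ) * upperBoxDim (Da a)) := by
  rintro θ ⟨hθ0, hθ1⟩
  have ha : ∀ n ≥ 1, 0 ≤ a n := fun n hn => (hpos n hn).le
  have hF := Da_subset_Icc ha hsumm htot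
  have hne : (Da a).Nonempty := ⟨0, zero_mem_Da⟩
  rcases hθ0.eq_or_lt with rfl | hθ
  · simp [upperIntDim, dimH_countable Da_countable]
  obtain ⟨hB0, hB1⟩ := upperBoxDim_mem_Icc hF hne
  set B := upperBoxDim (Da a)
  set D := 1 - (1 - θ) * B
  set R := θ * B / D
  have hD : 0 < D := by nlinarith
  have hR0 : 0 ≤ R := by positivity
  have hR1 : R ≤ 1 := by rw [div_le_one hD]; nlinarith
  have hθ' : 1 / 2 < 1 / θ := by rw [one_div_lt_one_div (by norm_num) hθ]; linarith
  have hexp := fun s => intDim_exponents (D := D) (R := R) (s := s) hθ.ne' rfl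
    (div_mul_cancel₀ (θ * B) hD.ne')
  rw [upperIntDim_eq_sInf hθ.ne']
  refine sInf_eq_of_Ioi_subset_of_subset_Ici (fun s (hsR : R < s) => ?_)
    (fun s hs => mem_Ici.2 (le_of_not_gt fun hsR => ?_))
  · obtain ⟨hp₁, hp₂⟩ := hexp s
    have hsR' : 0 < s - R := sub_pos.2 hsR
    exact upperIntDimAdmissible_Da (t := B + (s - R) * D / 2) ha hmono hsumm htot hθ hθ1
      (by linarith) hD (by rw [hp₁]; positivity)
      (by rw [hp₂]; exact mul_pos (mul_pos hsR' hD) (sub_pos.2 hθ'))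
      (eventually_coverNum_le_rpow hF hne (by nlinarith))
  · obtain ⟨hp₁, hp₂⟩ := hexp s
    have hsR' : s - R < 0 := sub_neg.2 hsR
    exact not_upperIntDimAdmissible (t := B + (s - R) * D / 2) hs.1 (by linarith) hD
      (by rw [hp₁]; nlinarith)
      (by rw [hp₂]; exact mul_neg_of_neg_of_pos (mul_neg_of_neg_of_pos hsR' hD) (sub_pos.2 hθ'))
      (frequently_rpow_le_coverNum hF hne (by nlinarith)) hs
end

section
/- Let B ∈ (0,1), ε ∈ (0, 1−B), θ ∈ (0,1], and s > θ(B+ε)/(1 − (1−θ)(B+ε)) with s > 0. Let {x_n} be a decreasing positive sequence with x_n ≤ n^{-(1−(B+ε))/(B+ε)} for all n ≥ N. Then for all sufficiently small δ > 0, the set {x_n : n ≥ 1} can be covered by a family U of intervals with diameters in [δ, δ^θ] such that ∑_{U ∈ U} |U|^s → 0 as δ → 0. Specifically, covering the first K := ⌈δ^{−(B+ε)(s+θ(1−s))}⌉ points by K intervals of length δ and the tail, contained in [0, x_K], by ⌈x_K/δ^θ⌉ intervals of length δ^θ yields a cover with ∑ |U|^s ≤ (δ^{−(B+ε)(s+θ(1−s))}+1)δ^s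 + δ^{θ(s−1)}δ^{(s+θ(1−s))(1−(B+ε))} + δ^{θs}, and each of these three terms tends to 0 as δ → 0. -/
open Filter Set Topology

/-!
Put `b = B + ε` and `K = ⌈δ^{-b(s + θ(1 - s))}⌉`. The first `K` points each get an interval of
length `δ`, costing about `δ^{s - b(s + θ(1 - s))}`. By the decay hypothesis every later point
lies in `[0, x_K] ⊆ [0, δ^{(s + θ(1 - s))(1 - b)}]`, which is tiled by intervals of length `δ^θ`;
their number times `δ^{θs}` is at most `δ^{s - b(s + θ(1 - s))} + δ^{θs}`. The condition on `s` is
exactly `b(s + θ(1 - s)) < s`, so every exponent is positive and the cost tends to `0`.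
-/

lemma tendsto_rpow_nhdsGT_zero_s9 {c : ℝ} (hc : 0 < c) :
    Tendsto (fun δ : ℝ => δ ^ c) (𝓝[>] 0) (𝓝 0) := by
  simpa [Real.zero_rpow hc.ne'] using
    (Real.continuousAt_rpow_const 0 c (Or.inr hc.le)).tendsto.mono_left nhdsWithin_le_nhds

noncomputable def coverBound (b θ s δ : ℝ) : ℝ :=
  (δ ^ (-(b * (s + θ * (1 - s)))) + 1) * δ ^ s
    + δ ^ (θ * (s - 1)) * δ ^ ((s + θ * (1 - s)) * (1 - b)) + δ ^ (θ * s)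

lemma coverBound_eq {b θ s δ : ℝ} (hδ : 0 < δ) :
    coverBound b θ s δ = 2 * δ ^ (s - b * (s + θ * (1 - s))) + δ ^ s + δ ^ (θ * s) := by
  have hfirst : δ ^ (-(b * (s + θ * (1 - s)))) * δ ^ s = δ ^ (s - b * (s + θ * (1 - s))) := by
    rw [← Real.rpow_add hδ]; ring_nf
  have hmiddle : δ ^ (θ * (s - 1)) * δ ^ ((s + θ * (1 - s)) * (1 - b))
      = δ ^ (s - b * (s + θ * (1 - s))) := by
    rw [← Real.rpow_add hδ]; ring_nf
  rw [coverBound, add_mul, one_mul, hfirst, hmiddle]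
  ring

lemma tendsto_coverBound {b θ s : ℝ} (hθ : 0 < θ) (hs : 0 < s)
    (hgap : b * (s + θ * (1 - s)) < s) :
    Tendsto (coverBound b θ s) (𝓝[>] 0) (𝓝 0) := by
  have hlim : Tendsto (fun δ : ℝ => 2 * δ ^ (s - b * (s + θ * (1 - s))) + δ ^ s + δ ^ (θ * s))
      (𝓝[>] 0) (𝓝 0) := by
    simpa using (((tendsto_rpow_nhdsGT_zero_s9 (sub_pos.2 hgap)).const_mul 2).add
      (tendsto_rpow_nhdsGT_zero_s9 hs)).add (tendsto_rpow_nhdsGT_zero_s9 (mul_pos hθ hs))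
  refine hlim.congr' ?_
  filter_upwards [self_mem_nhdsWithin] with δ hδ
  exact (coverBound_eq hδ).symm

lemma diam_Icc_add_self {a d : ℝ} (hd : 0 ≤ d) : Metric.diam (Icc a (a + d)) = d := by
  rw [Real.diam_Icc (by linarith), add_sub_cancel_left]

lemma exists_lt_ceil_div_mem_Icc {y L h : ℝ} (hy : 0 < y) (hyL : y ≤ L) (hh : 0 < h) :
    ∃ j < ⌈L / h⌉₊, y ∈ Icc (j * h) (j * h + h) := by
  have hceil : 0 < ⌈y / h⌉₊ := Nat.ceil_pos.2 (div_pos hy hh)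
  refine ⟨⌈y / h⌉₊ - 1, ?_, ?_, ?_⟩
  · have := Nat.ceil_mono (div_le_div_of_nonneg_right hyL hh.le)
    omega
  · have hlt := Nat.ceil_lt_add_one (div_pos hy hh).le
    rw [Nat.cast_pred hceil]
    nlinarith [div_mul_cancel₀ y hh.ne']
  · have hle := Nat.le_ceil (y / h)
    rw [Nat.cast_pred hceil]
    nlinarith [div_mul_cancel₀ y hh.ne']

section TailCover

variable (x : ℕ → ℝ) (K : ℕ) (δ h : ℝ)

def tailCover (i : ℕ) : Set ℝ :=
  if i < K then Icc (x (i + 1)) (x (i + 1) + δ) else Icc ((i - K : ℕ) * h) ((i - K : ℕ) * h + h)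

variable {x K δ h}

lemma diam_tailCover_of_lt {i : ℕ} (hδ : 0 ≤ δ) (hi : i < K) :
    Metric.diam (tailCover x K δ h i) = δ := by
  rw [tailCover, if_pos hi, diam_Icc_add_self hδ]

lemma diam_tailCover_of_le {i : ℕ} (hh : 0 ≤ h) (hi : K ≤ i) :
    Metric.diam (tailCover x K δ h i) = h := by
  rw [tailCover, if_neg hi.not_gt, diam_Icc_add_self hh]

lemma diam_tailCover_mem_Icc (i : ℕ) (hδ : 0 ≤ δ) (hδh : δ ≤ h) :
    Metric.diam (tailCover x K δ h i) ∈ Icc δ h := by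
  rcases lt_or_ge i K with hi | hi
  · rw [diam_tailCover_of_lt hδ hi]; exact ⟨le_rfl, hδh⟩
  · rw [diam_tailCover_of_le (hδ.trans hδh) hi]; exact ⟨hδh, le_rfl⟩

lemma subset_biUnion_tailCover (hx : AntitoneOn x (Ici 1)) (hxpos : ∀ n ≥ 1, 0 < x n)
    (hK : 1 ≤ K) (hδ : 0 ≤ δ) (hh : 0 < h) :
    {y | ∃ n ≥ 1, y = x n} ⊆ ⋃ i ∈ Finset.range (K + ⌈x K / h⌉₊), tailCover x K δ h i := by
  rintro y ⟨n, hn, rfl⟩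
  simp only [mem_iUnion, Finset.mem_range, exists_prop]
  rcases le_or_gt n K with hnK | hKn
  · refine ⟨n - 1, by omega, ?_⟩
    rw [tailCover, if_pos (by omega), Nat.sub_add_cancel hn]
    exact ⟨le_rfl, le_add_of_nonneg_right hδ⟩
  · obtain ⟨j, hj, hmem⟩ :=
      exists_lt_ceil_div_mem_Icc (hxpos n hn) (hx (mem_Ici.2 hK) (mem_Ici.2 hn) hKn.le) hh
    refine ⟨K + j, by omega, ?_⟩
    rwa [tailCover, if_neg (by omega), Nat.add_sub_cancel_left]

lemma sum_diam_rpow_tailCover (s : ℝ) (M : ℕ) (hδ : 0 ≤ δ) (hh : 0 ≤ h) :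
    ∑ i ∈ Finset.range (K + M), Metric.diam (tailCover x K δ h i) ^ s
      = K * δ ^ s + M * h ^ s := by
  have hhead : ∀ i ∈ Finset.range K, Metric.diam (tailCover x K δ h i) ^ s = δ ^ s :=
    fun i hi => by rw [diam_tailCover_of_lt hδ (Finset.mem_range.1 hi)]
  have htail : ∀ i ∈ Finset.range M, Metric.diam (tailCover x K δ h (K + i)) ^ s = h ^ s :=
    fun i _ => by rw [diam_tailCover_of_le hh (Nat.le_add_right K i)]
  rw [Finset.sum_range_add, Finset.sum_congr rfl hhead, Finset.sum_congr rfl htail]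
  simp

end TailCover

lemma ceil_div_mul_rpow_le {L h : ℝ} (s : ℝ) (hL : 0 ≤ L) (hh : 0 < h) :
    ⌈L / h⌉₊ * h ^ s ≤ L * h ^ (s - 1) + h ^ s := by
  have hceil := (Nat.ceil_lt_add_one (div_nonneg hL hh.le)).le
  calc ⌈L / h⌉₊ * h ^ s ≤ (L / h + 1) * h ^ s := by gcongr
    _ = L * h ^ (s - 1) + h ^ s := by rw [Real.rpow_sub_one hh.ne']; ring

lemma sum_diam_rpow_tailCover_le_coverBound {x : ℕ → ℝ} {K : ℕ} {b θ s δ : ℝ} (hδ : 0 < δ)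
    (hxK0 : 0 ≤ x K) (hK : K ≤ δ ^ (-(b * (s + θ * (1 - s)))) + 1)
    (hxK : x K ≤ δ ^ ((s + θ * (1 - s)) * (1 - b))) :
    ∑ i ∈ Finset.range (K + ⌈x K / δ ^ θ⌉₊), Metric.diam (tailCover x K δ (δ ^ θ) i) ^ s
      ≤ coverBound b θ s δ := by
  rw [sum_diam_rpow_tailCover s _ hδ.le (by positivity), ← Real.rpow_mul hδ.le]
  have hhead : (K : ℝ) * δ ^ s ≤ (δ ^ (-(b * (s + θ * (1 - s)))) + 1) * δ ^ s := by gcongr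
  have htail := ceil_div_mul_rpow_le s hxK0 (Real.rpow_pos_of_pos hδ θ)
  rw [← Real.rpow_mul hδ.le, ← Real.rpow_mul hδ.le] at htail
  have hmiddle : x K * δ ^ (θ * (s - 1))
      ≤ δ ^ (θ * (s - 1)) * δ ^ ((s + θ * (1 - s)) * (1 - b)) := by
    rw [mul_comm]; gcongr
  rw [coverBound]
  linarith

theorem covering_strategy_Da_general (B ε θ s : ℝ)
    (hB : B ∈ Set.Ioo (0:ℝ) 1) (hε : ε ∈ Set.Ioo (0:ℝ) (1 - B))
    (hθ : θ ∈ Set.Ioc (0:ℝ) 1) (hs : 0 < s)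
    (hsBig : θ * (B + ε) / (1 - (1 - θ) * (B + ε)) < s)
    (x : ℕ → ℝ) (hxpos : ∀ n ≥ 1, 0 < x n) (hxdec : ∀ n ≥ 1, x (n + 1) ≤ x n)
    (N : ℕ)
    (hxbound : ∀ n ≥ N, x n ≤ (n : ℝ) ^ (-((1 - (B + ε)) / (B + ε)))) :
    Tendsto (fun δ : ℝ =>
        (δ ^ (-((B + ε) * (s + θ * (1 - s)))) + 1) * δ ^ s
          + δ ^ (θ * (s - 1)) * δ ^ ((s + θ * (1 - s)) * (1 - (B + ε)))
          + δ ^ (θ * s))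
      (nhdsWithin 0 (Set.Ioi 0)) (nhds 0)
    ∧ ∀ᶠ δ : ℝ in nhdsWithin 0 (Set.Ioi 0),
        ∃ (I : Finset ℕ) (U : ℕ → Set ℝ),
          ({y : ℝ | ∃ n ≥ 1, y = x n} ⊆ ⋃ i ∈ I, U i) ∧
          (∀ i ∈ I, δ ≤ Metric.diam (U i) ∧ Metric.diam (U i) ≤ δ ^ θ) ∧
          ∑ i ∈ I, Metric.diam (U i) ^ s ≤
            (δ ^ (-((B + ε) * (s + θ * (1 - s)))) + 1) * δ ^ s
              + δ ^ (θ * (s - 1)) * δ ^ ((s + θ * (1 - s)) * (1 - (B + ε)))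
              + δ ^ (θ * s) := by
  obtain ⟨hB0, -⟩ := hB
  obtain ⟨hε0, hε1⟩ := hε
  obtain ⟨hθ0, hθ1⟩ := hθ
  set b := B + ε
  set c := s + θ * (1 - s)
  have hb0 : 0 < b := by positivity
  have hb1 : b < 1 := by linarith
  have hgap : b * c < s := by
    rw [div_lt_iff₀ (by nlinarith)] at hsBig
    linarith
  refine ⟨tendsto_coverBound hθ0 hs hgap, ?_⟩
  have hbc : 0 < b * c := mul_pos hb0 (by nlinarith)
  filter_upwards [Ioo_mem_nhdsGT one_pos,
    (tendsto_rpow_neg_nhdsGT_zero (neg_neg_of_pos hbc)).eventually_ge_atTop (N : ℝ)]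
    with δ ⟨hδ0, hδ1⟩ hδN
  set K := ⌈δ ^ (-(b * c))⌉₊
  have hKge : δ ^ (-(b * c)) ≤ K := Nat.le_ceil _
  have hNK : N ≤ K := by exact_mod_cast hδN.trans hKge
  have hK1 : 1 ≤ K := Nat.ceil_pos.2 (by positivity)
  have hxK : x K ≤ δ ^ (c * (1 - b)) := calc
    x K ≤ (K : ℝ) ^ (-((1 - b) / b)) := hxbound K hNK
    _ ≤ (δ ^ (-(b * c))) ^ (-((1 - b) / b)) :=
      Real.rpow_le_rpow_of_nonpos (by positivity) hKge
        (neg_nonpos.2 (div_nonneg (by linarith) hb0.le))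
    _ = δ ^ (c * (1 - b)) := by rw [← Real.rpow_mul hδ0.le]; congr 1; field_simp
  have hδθ : δ ≤ δ ^ θ := by simpa using Real.rpow_le_rpow_of_exponent_ge hδ0 hδ1.le hθ1
  exact ⟨Finset.range (K + ⌈x K / δ ^ θ⌉₊), tailCover x K δ (δ ^ θ),
    subset_biUnion_tailCover (antitoneOn_nat_Ici_of_succ_le hxdec) hxpos hK1 hδ0.le
      (by positivity),
    fun i _ => diam_tailCover_mem_Icc i hδ0.le hδθ,
    sum_diam_rpow_tailCover_le_coverBound hδ0 (hxpos K hK1).le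
      (Nat.ceil_lt_add_one (by positivity)).le hxK⟩

/-- Explicit covering estimate for the tail sequence: the three-term bound
`(δ^{-(B+ε)(s+θ(1-s))}+1)δ^s + δ^{θ(s-1)}δ^{(s+θ(1-s))(1-(B+ε))} + δ^{θs}`
tends to 0 as `δ → 0⁺`, and for all sufficiently small `δ > 0` the set
`{x_n : n ≥ 1}` admits a cover by intervals with diameters in `[δ, δ^θ]`
whose `s`-cost is at most this bound. -/
theorem covering_strategy_Da (B ε θ s : ℝ)
    (hB : B ∈ Set.Ioo (0:ℝ) 1) (hε : ε ∈ Set.Ioo (0:ℝ) (1 - B))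
    (hθ : θ ∈ Set.Ioc (0:ℝ) 1) (hs : 0 < s)
    (hsBig : θ * (B + ε) / (1 - (1 - θ) * (B + ε)) < s)
    (x : ℕ → ℝ) (hxpos : ∀ n ≥ 1, 0 < x n) (hxdec : ∀ n ≥ 1, x (n + 1) ≤ x n)
    (N : ℕ) (hN : 1 ≤ N)
    (hxbound : ∀ n ≥ N, x n ≤ (n : ℝ) ^ (-((1 - (B + ε)) / (B + ε)))) :
    Tendsto (fun δ : ℝ =>
        (δ ^ (-((B + ε) * (s + θ * (1 - s)))) + 1) * δ ^ s
          + δ ^ (θ * (s - 1)) * δ ^ ((s + θ * (1 - s)) * (1 - (B + ε)))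
          + δ ^ (θ * s))
      (nhdsWithin 0 (Set.Ioi 0)) (nhds 0)
    ∧ ∀ᶠ δ : ℝ in nhdsWithin 0 (Set.Ioi 0),
        ∃ (I : Finset ℕ) (U : ℕ → Set ℝ),
          ({y : ℝ | ∃ n ≥ 1, y = x n} ⊆ ⋃ i ∈ I, U i) ∧
          (∀ i ∈ I, δ ≤ Metric.diam (U i) ∧ Metric.diam (U i) ≤ δ ^ θ) ∧
          ∑ i ∈ I, Metric.diam (U i) ^ s ≤
            (δ ^ (-((B + ε) * (s + θ * (1 - s)))) + 1) * δ ^ s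
              + δ ^ (θ * (s - 1)) * δ ^ ((s + θ * (1 - s)) * (1 - (B + ε)))
              + δ ^ (θ * s) :=
  covering_strategy_Da_general B ε θ s hB hε hθ hs hsBig x hxpos hxdec N hxbound
end
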